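/- Let k ∈ {0,1} and let u, v, w be positive integers. Then, with φ and ε as above and Δ = σ₁σ₂σ₁: tr(Δ²ᵏ σ₁⁻¹ σ₂ᵘ σ₁⁻ᵛ σ₂ʷ) = (-1)ᵏ (2 + (u+w)(1+v) + uvw) and ε(Δ²ᵏ σ₁⁻¹ σ₂ᵘ σ₁⁻ᵛ σ₂ʷ) = u + w - v - 1 + 6k. -/

import Mathlib

open Matrix

abbrev SL2Z := Matrix.SpecialLinearGroup (Fin 2) ℤ

def braidRels : Set (FreeGroup Bool) :=
  {FreeGroup.of true * FreeGroup.of false * FreeGroup.of true *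
    (FreeGroup.of false * FreeGroup.of true * FreeGroup.of false)⁻¹}

abbrev B3 := PresentedGroup braidRels

def σ₁ : B3 := PresentedGroup.of true
def σ₂ : B3 := PresentedGroup.of false
def Δ : B3 := σ₁ * σ₂ * σ₁

def S : SL2Z := ⟨!![1, 1; 0, 1], by norm_num [Matrix.det_fin_two_of]⟩
def T : SL2Z := ⟨!![1, 0; -1, 1], by norm_num [Matrix.det_fin_two_of]⟩

lemma STS_eq_TST : S * T * S = T * S * T := by
  ext i j
  simp only [Matrix.SpecialLinearGroup.coe_mul]
  fin_cases i <;> fin_cases j <;>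
    simp [S, T, Matrix.mul_apply, Fin.sum_univ_succ]

def φ : B3 →* SL2Z :=
  PresentedGroup.toGroup (f := fun b => if b then S else T) (by
    intro r hr
    simp only [braidRels, Set.mem_singleton_iff] at hr
    subst hr
    simp only [_root_.map_mul, _root_.map_inv, FreeGroup.lift_apply_of, if_true, if_false]
    rw [mul_inv_eq_one]
    exact STS_eq_TST)

def ε : B3 →* Multiplicative ℤ :=
  PresentedGroup.toGroup (f := fun _ => Multiplicative.ofAdd (1 : ℤ)) (by
    intro r hr
    simp only [braidRels, Set.mem_singleton_iff] at hr
    subst hr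
    simp only [_root_.map_mul, _root_.map_inv, FreeGroup.lift_apply_of]
    group)

def expSum (g : B3) : ℤ := Multiplicative.toAdd (ε g)

def trB (g : B3) : ℤ := Matrix.trace (φ g : Matrix (Fin 2) (Fin 2) ℤ)

/-! `φ` sends `σ₁ ^ a` and `σ₂ ^ b` to unipotent matrices whose off-diagonal entries are `a` and
`-b`, so the trace of `σ₁ ^ a σ₂ ^ b σ₁ ^ c σ₂ ^ d` is the polynomial `2 - (a + c)(b + d) + abcd`;
the word of the theorem is the case `(a, b, c, d) = (-1, u, -v, w)`. Since `φ (Δ ^ 2) = -1` is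
central, each factor `Δ ^ 2` only flips the sign of the trace, and it adds `6` to the exponent sum. -/

open Matrix.SpecialLinearGroup

lemma φ_σ₁ : φ σ₁ = S := by
  simp [φ, σ₁, PresentedGroup.toGroup.of]

lemma φ_σ₂ : φ σ₂ = T := by
  simp [φ, σ₂, PresentedGroup.toGroup.of]

lemma S_eq_modularGroup_T : S = ModularGroup.T := rfl

lemma T_eq_conj_modularGroup_T : T = ModularGroup.S * ModularGroup.T * ModularGroup.S⁻¹ := by
  ext i j
  fin_cases i <;> fin_cases j <;>
    simp [T, ModularGroup.coe_S, ModularGroup.coe_T, coe_inv, Matrix.adjugate_fin_two]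

lemma coe_φ_σ₁_zpow (n : ℤ) : (φ (σ₁ ^ n) : Matrix (Fin 2) (Fin 2) ℤ) = !![1, n; 0, 1] := by
  rw [map_zpow, φ_σ₁, S_eq_modularGroup_T, ModularGroup.coe_T_zpow]

lemma coe_φ_σ₂_zpow (n : ℤ) : (φ (σ₂ ^ n) : Matrix (Fin 2) (Fin 2) ℤ) = !![1, 0; -n, 1] := by
  rw [map_zpow, φ_σ₂, T_eq_conj_modularGroup_T, conj_zpow]
  simp [ModularGroup.coe_T_zpow, ModularGroup.coe_S, coe_inv, Matrix.adjugate_fin_two]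

lemma trB_σ₁_zpow_mul_σ₂_zpow_mul_σ₁_zpow_mul_σ₂_zpow (a b c d : ℤ) :
    trB (σ₁ ^ a * σ₂ ^ b * σ₁ ^ c * σ₂ ^ d) = 2 - (a + c) * (b + d) + a * b * c * d := by
  simp only [trB, map_mul, coe_mul, coe_φ_σ₁_zpow, coe_φ_σ₂_zpow, Matrix.mul_fin_two,
    Matrix.trace_fin_two_of]
  ring

lemma coe_φ_Δ : (φ Δ : Matrix (Fin 2) (Fin 2) ℤ) = !![0, 1; -1, 0] := by
  rw [Δ, map_mul, map_mul, φ_σ₁, φ_σ₂, coe_mul, coe_mul]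
  simp [S, T]

lemma φ_Δ_sq : φ (Δ ^ 2) = -1 := by
  apply Subtype.ext
  rw [map_pow, coe_pow, coe_φ_Δ, coe_neg, coe_one, sq, Matrix.mul_fin_two, Matrix.one_fin_two]
  simp [Matrix.neg_of]

lemma trB_Δ_sq_mul (g : B3) : trB (Δ ^ 2 * g) = -trB g := by
  rw [trB, trB, map_mul, φ_Δ_sq, coe_mul, coe_neg, coe_one, neg_one_mul, Matrix.trace_neg]

lemma trB_Δ_pow_two_mul_mul (k : ℕ) (g : B3) : trB (Δ ^ (2 * k) * g) = (-1) ^ k * trB g := by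
  induction k generalizing g with
  | zero => simp
  | succ k ih =>
    rw [mul_add_one, pow_add, mul_assoc, ih, trB_Δ_sq_mul, pow_succ, mul_neg_one, mul_neg,
      neg_mul]

lemma expSum_mul (g h : B3) : expSum (g * h) = expSum g + expSum h := by
  simp [expSum]

lemma expSum_pow (g : B3) (n : ℕ) : expSum (g ^ n) = n * expSum g := by
  simp [expSum]

lemma expSum_zpow (g : B3) (n : ℤ) : expSum (g ^ n) = n * expSum g := by
  simp [expSum]

lemma expSum_σ₁ : expSum σ₁ = 1 := by
  simp [expSum, ε, σ₁, PresentedGroup.toGroup.of]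

lemma expSum_σ₂ : expSum σ₂ = 1 := by
  simp [expSum, ε, σ₂, PresentedGroup.toGroup.of]

lemma expSum_Δ : expSum Δ = 3 := by
  simp only [Δ, expSum_mul, expSum_σ₁, expSum_σ₂]
  norm_num

theorem stmt15_general (k u v w : ℕ) :
    trB (Δ ^ (2 * k) * σ₁⁻¹ * σ₂ ^ u * σ₁ ^ (-(v : ℤ)) * σ₂ ^ w) =
      (-1) ^ k * (2 + ((u : ℤ) + w) * (1 + v) + u * v * w) ∧
    expSum (Δ ^ (2 * k) * σ₁⁻¹ * σ₂ ^ u * σ₁ ^ (-(v : ℤ)) * σ₂ ^ w) =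
      (u : ℤ) + w - v - 1 + 6 * k := by
  have hword : Δ ^ (2 * k) * σ₁⁻¹ * σ₂ ^ u * σ₁ ^ (-(v : ℤ)) * σ₂ ^ w =
      Δ ^ (2 * k) * (σ₁ ^ (-1 : ℤ) * σ₂ ^ (u : ℤ) * σ₁ ^ (-(v : ℤ)) * σ₂ ^ (w : ℤ)) := by
    simp only [_root_.zpow_neg_one, zpow_natCast, mul_assoc]
  rw [hword, trB_Δ_pow_two_mul_mul, trB_σ₁_zpow_mul_σ₂_zpow_mul_σ₁_zpow_mul_σ₂_zpow]
  simp only [expSum_mul, expSum_pow, expSum_zpow, expSum_Δ, expSum_σ₁, expSum_σ₂]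
  constructor <;> push_cast <;> ring

/-- Trace and exponent sum of Δ²ᵏ σ₁⁻¹ σ₂ᵘ σ₁⁻ᵛ σ₂ʷ for k ∈ {0,1} and positive u, v, w. -/
theorem stmt15 (k u v w : ℕ) (hk : k = 0 ∨ k = 1)
    (hu : 0 < u) (hv : 0 < v) (hw : 0 < w) :
    trB (Δ ^ (2 * k) * σ₁⁻¹ * σ₂ ^ u * σ₁ ^ (-(v : ℤ)) * σ₂ ^ w) =
      (-1) ^ k * (2 + ((u : ℤ) + w) * (1 + v) + u * v * w) ∧
    expSum (Δ ^ (2 * k) * σ₁⁻¹ * σ₂ ^ u * σ₁ ^ (-(v : ℤ)) * σ₂ ^ w) =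
      (u : ℤ) + w - v - 1 + 6 * k :=
  stmt15_general k u v w
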